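/- In the mapping cone sequence of the previous setting, the first differential d_1 = [[-f_2, 0],[h_2, g_1]] : A_2 ⊕ B_1 → A_3 ⊕ B_2 is a weak cokernel of d_0 = (-f_1, h_1)^T : A_1 → A_2 ⊕ B_1. -/
import Mathlib


open CategoryTheory Limits

universe v u

variable {C : Type u} [Category.{v} C]

section Defs
variable [Preadditive C]

/-- `g` is a weak cokernel of `f`: `g ∘ f = 0` and every morphism killing `f`
factors (not necessarily uniquely) through `g`. -/
def IsWeakCokernel {A B X : C} (f : A ⟶ B) (g : B ⟶ X) : Prop :=
  f ≫ g = 0 ∧ ∀ ⦃D : C⦄ (h : B ⟶ D), f ≫ h = 0 → ∃ k : X ⟶ D, h = g ≫ k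

/-- `g` is a cokernel of `f`. -/
def IsCokernelOf {A B X : C} (f : A ⟶ B) (g : B ⟶ X) : Prop :=
  f ≫ g = 0 ∧ ∀ ⦃D : C⦄ (h : B ⟶ D), f ≫ h = 0 → ∃! k : X ⟶ D, h = g ≫ k

/-- `f` is a weak kernel of `g`. -/
def IsWeakKernel {A B X : C} (g : B ⟶ X) (f : A ⟶ B) : Prop :=
  f ≫ g = 0 ∧ ∀ ⦃D : C⦄ (h : D ⟶ B), h ≫ g = 0 → ∃ k : D ⟶ A, h = k ≫ f

/-- `f` is a kernel of `g`. -/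
def IsKernelOf {A B X : C} (g : B ⟶ X) (f : A ⟶ B) : Prop :=
  f ≫ g = 0 ∧ ∀ ⦃D : C⦄ (h : D ⟶ B), h ≫ g = 0 → ∃! k : D ⟶ A, h = k ≫ f

/-- The sequence `X 0 → X 1 → ⋯ → X (n+1)` is right `n`-exact, i.e.
`(d 1, …, d n)` is an `n`-cokernel of `d 0`: each `d (k+1)` with `k + 2 ≤ n` is a
weak cokernel of `d k`, and `d n` is a cokernel of `d (n-1)`. -/
def IsRightNExactSeq (n : ℕ) (X : ℕ → C) (d : ∀ i, X i ⟶ X (i + 1)) : Prop :=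
  (∀ k, k + 2 ≤ n → IsWeakCokernel (d k) (d (k + 1))) ∧ IsCokernelOf (d (n - 1)) (d (n - 1 + 1))

/-- The sequence `X 0 → X 1 → ⋯ → X (n+1)` is left `n`-exact. -/
def IsLeftNExactSeq (n : ℕ) (X : ℕ → C) (d : ∀ i, X i ⟶ X (i + 1)) : Prop :=
  (∀ k, k + 2 ≤ n → IsWeakKernel (d (k + 1)) (d k)) ∧ IsKernelOf (d 1) (d 0)

/-- `f : A ⟶ B` is `X`-monic with respect to the subcategory given by the predicate `P`:
every morphism from `A` to an object of `P` factors through `f`. -/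
def XMonic (P : C → Prop) {A B : C} (f : A ⟶ B) : Prop :=
  ∀ ⦃M : C⦄, P M → ∀ g : A ⟶ M, ∃ h : B ⟶ M, g = f ≫ h

/-- `f` is `X`-epic. -/
def XEpic (P : C → Prop) {A B : C} (f : A ⟶ B) : Prop :=
  ∀ ⦃M : C⦄, P M → ∀ g : M ⟶ B, ∃ h : M ⟶ A, g = h ≫ f

/-- `(-1)^k • f`. -/
def psign (k : ℕ) {A B : C} (f : A ⟶ B) : A ⟶ B := if Even k then f else -f

/-- `f : A ⟶ B` has an `n`-cokernel. -/
def HasNCokernel (n : ℕ) {A B : C} (f : A ⟶ B) : Prop :=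
  ∃ (X : ℕ → C) (d : ∀ i, X i ⟶ X (i + 1)) (e0 : X 0 = A) (e1 : X 1 = B),
    d 0 = eqToHom e0 ≫ f ≫ eqToHom e1.symm ∧ IsRightNExactSeq n X d

/-- `f : A ⟶ B` has a special `n`-cokernel with respect to `P`: an `n`-cokernel all of whose
intermediate objects lie in `P`. -/
def HasSpecialNCokernel (P : C → Prop) (n : ℕ) {A B : C} (f : A ⟶ B) : Prop :=
  ∃ (X : ℕ → C) (d : ∀ i, X i ⟶ X (i + 1)) (e0 : X 0 = A) (e1 : X 1 = B),
    d 0 = eqToHom e0 ≫ f ≫ eqToHom e1.symm ∧ IsRightNExactSeq n X d ∧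
    ∀ i, 2 ≤ i → i ≤ n → P (X i)

end Defs

section Cone
variable [Preadditive C] [HasBinaryBiproducts C]

/-- The middle differentials of the mapping cone of a morphism `h` of complexes `(A, f) → (B, g)`:
the matrix `[[-f_{i+1}, 0], [h_{i+1}, g_i]] : A_{i+1} ⊕ B_i ⟶ A_{i+2} ⊕ B_{i+1}`. -/
noncomputable def coneMid (A B : ℕ → C) (f : ∀ i, A i ⟶ A (i + 1)) (g : ∀ i, B i ⟶ B (i + 1))
    (h : ∀ i, A i ⟶ B i) (i : ℕ) : (A (i + 1) ⊞ B i : C) ⟶ (A (i + 2) ⊞ B (i + 1) : C) :=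
  biprod.lift (biprod.fst ≫ (-f (i + 1))) (biprod.fst ≫ h (i + 1) + biprod.snd ≫ g i)

end Cone

theorem IsCokernelOf.isWeakCokernel [Preadditive C] {A B X : C} {f : A ⟶ B} {g : B ⟶ X}
    (h : IsCokernelOf f g) : IsWeakCokernel f g :=
  ⟨h.1, fun _ p hp => (h.2 p hp).exists⟩

theorem weak_cok_of_rightNExact [Preadditive C] {n : ℕ} (hn : 2 ≤ n) {X : ℕ → C}
    {d : ∀ i, X i ⟶ X (i + 1)} (hX : IsRightNExactSeq n X d) (k : ℕ) (hk : k + 1 ≤ n) :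
    IsWeakCokernel (d k) (d (k + 1)) := by
  rcases lt_or_eq_of_le hk with hlt | heq
  · exact hX.1 k (by omega)
  · have h1 : n - 1 = k := by omega
    have := hX.2
    rw [h1] at this
    exact this.isWeakCokernel

/-- In the mapping cone of a morphism of right `n`-exact sequences with
identity first component, the differential `d 1 = [[-f 2, 0], [h 2, g 1]]` is a weak
cokernel of `d 0 = (-f 1, h 1)ᵀ`. -/
theorem cone_d1_weak_cokernel_of_d0
    [Preadditive C] [HasZeroObject C] [HasFiniteBiproducts C] [HasBinaryBiproducts C]
    (n : ℕ) (hn : 2 ≤ n)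
    (A B : ℕ → C) (f : ∀ i, A i ⟶ A (i + 1)) (g : ∀ i, B i ⟶ B (i + 1))
    (h : ∀ i, A i ⟶ B i) (e : A 0 = B 0) (h0 : h 0 = eqToHom e)
    (hcomm : ∀ i, f i ≫ h (i + 1) = h i ≫ g i)
    (hA : IsRightNExactSeq n A f) (hB : IsRightNExactSeq n B g) :
    IsWeakCokernel (biprod.lift (-f 1) (h 1)) (coneMid A B f g h 1) := by
  have hf01 : f 0 ≫ f 1 = 0 := (hA.1 0 hn).1
  have hf12 : IsWeakCokernel (f 1) (f 2) := weak_cok_of_rightNExact hn hA 1 (by omega)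
  have hg01 : IsWeakCokernel (g 0) (g 1) := weak_cok_of_rightNExact hn hB 0 (by omega)
  constructor
  · apply biprod.hom_ext
    · simp only [coneMid, Category.assoc, biprod.lift_fst, zero_comp, biprod.lift_fst_assoc,
        Preadditive.neg_comp, Preadditive.comp_neg, neg_neg, hf12.1]
    · simp only [coneMid, Category.assoc, biprod.lift_snd, zero_comp, Preadditive.comp_add,
        biprod.lift_fst_assoc, biprod.lift_snd_assoc, Preadditive.neg_comp, hcomm 1]
      exact neg_add_cancel _
  · intro D p hp
    obtain ⟨pA, pB, hpd⟩ : ∃ (pA : A 2 ⟶ D) (pB : B 1 ⟶ D), p = biprod.desc pA pB :=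
      ⟨biprod.inl ≫ p, biprod.inr ≫ p, by apply biprod.hom_ext' <;> simp⟩
    subst hpd
    have hp' : (-f 1) ≫ pA + h 1 ≫ pB = 0 := by rw [← biprod.lift_desc]; exact hp
    have key : f 1 ≫ pA = h 1 ≫ pB := by
      rw [Preadditive.neg_comp, neg_add_eq_zero] at hp'
      exact hp'
    have hg0pB : g 0 ≫ pB = 0 := by
      have h1 : h 0 ≫ g 0 ≫ pB = 0 := by
        rw [← Category.assoc, ← hcomm 0, Category.assoc, ← key, ← Category.assoc, hf01,
          zero_comp]
      rw [h0] at h1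
      simpa using eqToHom e.symm ≫= h1
    obtain ⟨kB, hkB⟩ := hg01.2 pB hg0pB
    have hfq : f 1 ≫ (pA - h 2 ≫ kB) = 0 := by
      rw [Preadditive.comp_sub, key, ← Category.assoc (f 1) (h 2) kB, hcomm 1,
        Category.assoc, ← hkB, sub_self]
    obtain ⟨q, hq⟩ := hf12.2 _ hfq
    have c1 : biprod.inl ≫ coneMid A B f g h 1 = biprod.lift (-f 2) (h 2) := by
      apply biprod.hom_ext <;> simp [coneMid]
    have c2 : biprod.inr ≫ coneMid A B f g h 1 = biprod.lift 0 (g 1) := by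
      apply biprod.hom_ext <;> simp [coneMid]
    refine ⟨biprod.desc (-q) kB, ?_⟩
    apply biprod.hom_ext'
    · rw [biprod.inl_desc, ← Category.assoc, c1, biprod.lift_desc]
      simp only [Preadditive.neg_comp, Preadditive.comp_neg, neg_neg]
      rw [← sub_eq_iff_eq_add]
      exact hq
    · rw [biprod.inr_desc, ← Category.assoc, c2, biprod.lift_desc, zero_comp, zero_add]
      exact hkB
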